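/- arXiv:2110.09066 — 13 statements merged into one kernel-verified Lean document; each statement's English description precedes it below -/
import Mathlib

section
/- For two agents with symmetric additive valuations with externalities (i.e., V_1(1,a)=V_2(2,a) and V_1(2,a)=V_2(1,a) for every item a), the greedy procedure that allocates items in decreasing order of |V_1(1,a)-V_1(2,a)|, always giving the current item according to the preference of the agent with the smaller current total value, produces an allocation in which at most one agent envies the other, and any envy is eliminated by removing a single suitable item. -/
/-!
Let the advantage of agent `i` in a partial allocation be her value of it minus the other
agent's value of it. By symmetry, agent `i` envies exactly when her advantage is negative; she is
then the poorer agent, so the greedy rule gives the next item to whomever she prefers, which by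
symmetry does not decrease her advantage. An additive quantity that never decreases while it is
negative can, once negative, be made nonnegative by deleting one item: either it was already
negative before the last step and the old witness still works, or the last step made it negative
and deleting that step's item undoes this.
-/

noncomputable section

/-- Partial allocations between two agents (`true` = agent 1, `false` = agent 2) are
represented as lists of (item, owner) pairs.  `listVal V i L` is the value agent `i`
derives from the partial allocation `L`, with externalities
(`V i j a` = value `i` gets when item `a` goes to agent `j`). -/
def listVal {α : Type*} (V : Bool → Bool → α → ℝ) (i : Bool) (L : List (α × Bool)) : ℝ :=
  (L.map fun p => V i p.2 p.1).sum

/-- The value agent `i` derives from the allocation obtained from `L` by swapping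
the two agents' bundles. -/
def swapVal {α : Type*} (V : Bool → Bool → α → ℝ) (i : Bool) (L : List (α × Bool)) : ℝ :=
  (L.map fun p => V i (!p.2) p.1).sum

/-- One step of the greedy procedure: the agent with the smaller current total value
decides which of the two agents receives the next item `a`, according to her own
preference (ties broken in favour of agent 1 / of giving the item to agent 1). -/
def greedyStep {α : Type*} (V : Bool → Bool → α → ℝ) (L : List (α × Bool)) (a : α) :
    List (α × Bool) :=
  let poor : Bool := if listVal V true L ≤ listVal V false L then true else false
  let owner : Bool := if V poor false a ≤ V poor true a then true else false
  (a, owner) :: L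

/-- The greedy procedure run on the list of items `l`. -/
def greedy {α : Type*} (V : Bool → Bool → α → ℝ) (l : List α) : List (α × Bool) :=
  l.foldl (greedyStep V) []

section ErasableToNonneg

variable {β : Type*} [BEq β] (f : β → ℝ)

def ErasableToNonneg (L : List β) : Prop :=
  (L.map f).sum < 0 → ∃ p ∈ L, 0 ≤ ((L.erase p).map f).sum

variable {f}

theorem erasableToNonneg_nil : ErasableToNonneg f [] := by
  simp [ErasableToNonneg]

theorem ErasableToNonneg.cons [LawfulBEq β] {L : List β} (h : ErasableToNonneg f L) {q : β}
    (hq : (L.map f).sum < 0 → 0 ≤ f q) : ErasableToNonneg f (q :: L) := by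
  intro hneg
  rw [List.map_cons, List.sum_cons] at hneg
  rcases lt_or_ge (L.map f).sum 0 with hL | hL
  · obtain ⟨p, hpL, hp⟩ := h hL
    have hsplit : (L.map f).sum = f p + ((L.erase p).map f).sum := by
      simpa using ((List.perm_cons_erase hpL).map f).sum_eq
    have hfp : f p < 0 := by linarith [hq hL]
    have hpq : q ≠ p := by rintro rfl; linarith [hq hL]
    refine ⟨p, List.mem_cons_of_mem q hpL, ?_⟩
    rw [List.erase_cons_tail (by simpa using hpq), List.map_cons, List.sum_cons]
    linarith [hq hL]
  · exact ⟨q, List.mem_cons_self, by simpa using hL⟩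

end ErasableToNonneg

section Greedy

variable {α : Type*} {V : Bool → Bool → α → ℝ}

def advantage (V : Bool → Bool → α → ℝ) (i : Bool) (p : α × Bool) : ℝ :=
  V i p.2 p.1 - V (!i) p.2 p.1

theorem sum_map_advantage (i : Bool) (L : List (α × Bool)) :
    (L.map (advantage V i)).sum = listVal V i L - listVal V (!i) L := by
  induction L with
  | nil => simp [listVal]
  | cons q L ih => simp only [listVal, advantage, List.map_cons, List.sum_cons] at ih ⊢; linarith

theorem exists_greedyStep_eq_cons (i : Bool) (L : List (α × Bool)) (a : α) :
    ∃ o, greedyStep V L a = (a, o) :: L ∧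
      (listVal V i L < listVal V (!i) L → V i (!o) a ≤ V i o a) := by
  refine ⟨_, rfl, fun henvy => ?_⟩
  cases i <;> simp only [Bool.not_true, Bool.not_false] at henvy <;> split_ifs <;> simp_all <;>
    linarith

section Symmetric

variable (hsym : ∀ a : α, V true true a = V false false a ∧ V true false a = V false true a)
include hsym

theorem not_agent_eq_not_owner (i j : Bool) (a : α) : V (!i) j a = V i (!j) a := by
  cases i <;> cases j <;> simp [hsym a]

theorem swapVal_eq_listVal_not (i : Bool) (L : List (α × Bool)) :
    swapVal V i L = listVal V (!i) L := by
  simp only [swapVal, listVal, not_agent_eq_not_owner hsym]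

theorem advantage_nonneg_of_prefers {i o : Bool} {a : α} (h : V i (!o) a ≤ V i o a) :
    0 ≤ advantage V i (a, o) := by
  simpa [advantage, not_agent_eq_not_owner hsym] using h

theorem erasableToNonneg_greedy [DecidableEq α] (i : Bool) (l : List α) :
    ErasableToNonneg (advantage V i) (greedy V l) :=
  List.foldlRecOn l (greedyStep V) erasableToNonneg_nil fun L hL a _ => by
    obtain ⟨o, hstep, hpref⟩ := exists_greedyStep_eq_cons i L a
    rw [hstep]
    refine hL.cons fun hneg => advantage_nonneg_of_prefers hsym (hpref ?_)
    linarith [sum_map_advantage (V := V) i L]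

end Symmetric

end Greedy

theorem greedy_two_agents_symmetric_general {α : Type*} [DecidableEq α]
    (V : Bool → Bool → α → ℝ)
    (hsym : ∀ a : α, V true true a = V false false a ∧ V true false a = V false true a)
    (l : List α) :
    ¬ (listVal V true (greedy V l) < swapVal V true (greedy V l) ∧
        listVal V false (greedy V l) < swapVal V false (greedy V l)) ∧
      ∀ i : Bool, listVal V i (greedy V l) < swapVal V i (greedy V l) →
        ∃ p ∈ greedy V l,
          swapVal V i ((greedy V l).erase p) ≤ listVal V i ((greedy V l).erase p) := by
  simp only [swapVal_eq_listVal_not hsym, Bool.not_true, Bool.not_false]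
  refine ⟨fun ⟨h₁, h₂⟩ => by linarith, fun i hi => ?_⟩
  obtain ⟨p, hp, hnonneg⟩ :=
    erasableToNonneg_greedy hsym i l (by rw [sum_map_advantage]; linarith)
  exact ⟨p, hp, by rw [sum_map_advantage] at hnonneg; linarith⟩

/-- For two agents with symmetric additive valuations with externalities,
the greedy procedure that allocates items in decreasing order of
`|V₁(1,a) − V₁(2,a)|`, always giving the current item according to the preference of
the agent with the smaller current total value, produces an allocation in which
at most one agent envies the other, and any envy is eliminated by removing a single
suitable item. -/
theorem greedy_two_agents_symmetric {α : Type*} [DecidableEq α]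
    (V : Bool → Bool → α → ℝ)
    (hsym : ∀ a : α, V true true a = V false false a ∧ V true false a = V false true a)
    (l : List α)
    (hsorted : l.Pairwise fun a b =>
      |V true true b - V true false b| ≤ |V true true a - V true false a|) :
    ¬ (listVal V true (greedy V l) < swapVal V true (greedy V l) ∧
        listVal V false (greedy V l) < swapVal V false (greedy V l)) ∧
      ∀ i : Bool, listVal V i (greedy V l) < swapVal V i (greedy V l) →
        ∃ p ∈ greedy V l,
          swapVal V i ((greedy V l).erase p) ≤ listVal V i ((greedy V l).erase p) :=
  greedy_two_agents_symmetric_general V hsym l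
end
end

section
/- For two agents with symmetric additive valuations with externalities, an EFX allocation always exists: there is a partition of the items into two bundles such that for each agent i and each item a whose removal strictly decreases i's envy difference, removing a eliminates i's envy. -/
open Finset

noncomputable section

/-- Value agent `i` derives from allocation `π`, restricted to the items in `S`
(with additive externalities: `V i j a` is the value `i` gets when item `a` goes to `j`). -/
def alval {α N : Type*} [DecidableEq α] (V : N → N → α → ℝ) (i : N) (π : α → N)
    (S : Finset α) : ℝ := ∑ a ∈ S, V i (π a) a

/-- The allocation obtained from `π` by swapping the bundles of agents `i` and `j`. -/
def swapAlloc {α N : Type*} [DecidableEq N] (i j : N) (π : α → N) : α → N :=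
  fun a => Equiv.swap i j (π a)

/-- Agent `i` envies agent `j` in allocation `π`. -/
def Envies {α N : Type*} [Fintype α] [DecidableEq α] [DecidableEq N]
    (V : N → N → α → ℝ) (π : α → N) (i j : N) : Prop :=
  alval V i π univ < alval V i (swapAlloc i j π) univ

/-- Envy-freeness up to any item, under externalities. -/
def EFX {α N : Type*} [Fintype α] [DecidableEq α] [DecidableEq N]
    (V : N → N → α → ℝ) (π : α → N) : Prop :=
  ∀ i j : N, Envies V π i j → ∀ a : α,
    alval V i π (univ.erase a) - alval V i (swapAlloc i j π) (univ.erase a) >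
      alval V i π univ - alval V i (swapAlloc i j π) univ →
    alval V i (swapAlloc i j π) (univ.erase a) ≤ alval V i π (univ.erase a)

/-- Envy-freeness up to one item, under externalities. -/
def EF1 {α N : Type*} [Fintype α] [DecidableEq α] [DecidableEq N]
    (V : N → N → α → ℝ) (π : α → N) : Prop :=
  ∀ i j : N, ∃ C : Finset α, C.card ≤ 1 ∧
    alval V i (swapAlloc i j π) (univ \ C) ≤ alval V i π (univ \ C)

/-- For two agents with *symmetric* additive valuations with externalities,
an EFX allocation always exists. Agents are `Bool` (with `true` playing the role of agent 1
and `false` that of agent 2). -/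
theorem efx_exists_two_agents_symmetric {α : Type*} [Fintype α] [DecidableEq α]
    (V : Bool → Bool → α → ℝ)
    (hsym : ∀ a : α, V true true a = V false false a ∧ V true false a = V false true a) :
    ∃ π : α → Bool, EFX V π := by
  classical
  -- d π a : marginal value for agent `true` of item a under π vs flipped
  set f : (α → Bool) → α → ℝ := fun π a => V true (π a) a - V true (!(π a)) a with hf
  set D : (α → Bool) → ℝ := fun π => ∑ a, f π a with hD
  obtain ⟨π, -, hmin⟩ := Finset.exists_min_image (univ : Finset (α → Bool))
    (fun π => |D π|) ⟨fun _ => true, mem_univ _⟩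
  -- basic rewriting lemmas
  have hswapTF : ∀ ρ : α → Bool, swapAlloc true false ρ = fun a => !(ρ a) := by
    intro ρ; funext a; cases h : ρ a <;> simp [swapAlloc, h]
  have hswapFT : ∀ ρ : α → Bool, swapAlloc false true ρ = fun a => !(ρ a) := by
    intro ρ; funext a; cases h : ρ a <;> simp [swapAlloc, h]
  have hVfalse : ∀ (b : Bool) (a : α), V false b a = V true (!b) a := by
    intro b a; cases b
    · exact (hsym a).1.symm
    · exact (hsym a).2.symm
  -- minimality gives the key inequality per item
  have hkey : ∀ a : α, |D π| ≤ |D π - 2 * f π a| := by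
    intro a
    have h2 := hmin (Function.update π a (!(π a))) (mem_univ _)
    have hupd : D (Function.update π a (!(π a))) = D π - 2 * f π a := by
      have ha : (a : α) ∈ (univ : Finset α) := mem_univ a
      show (∑ x, f (Function.update π a (!(π a))) x) = (∑ x, f π x) - 2 * f π a
      rw [← Finset.sum_erase_add _ _ ha, ← Finset.sum_erase_add _ _ ha]
      have h1 : ∀ x ∈ (univ : Finset α).erase a,
          f (Function.update π a (!(π a))) x = f π x := by
        intro x hx
        have : x ≠ a := (Finset.mem_erase.mp hx).1
        simp [hf, Function.update_of_ne this]
      rw [Finset.sum_congr rfl h1]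
      have : f (Function.update π a (!(π a))) a = - f π a := by
        simp only [hf, Function.update_self, Bool.not_not]
        ring
      rw [this]; ring
    rwa [hupd] at h2
  have keylt : ∀ d g : ℝ, d < 0 → g < 0 → |d| ≤ |d - 2 * g| → g ≤ d := by
    intro d g hd hg h
    rcases abs_cases (d - 2 * g) with ⟨h1, _⟩ | ⟨h1, _⟩ <;>
      rw [abs_of_neg hd] at h <;> linarith
  have keygt : ∀ d g : ℝ, 0 < d → 0 < g → |d| ≤ |d - 2 * g| → d ≤ g := by
    intro d g hd hg h
    have h' : |(-d)| ≤ |(-d) - 2 * (-g)| := by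
      rw [abs_neg]
      have : (-d) - 2 * (-g) = -(d - 2 * g) := by ring
      rw [this, abs_neg]; exact h
    have := keylt (-d) (-g) (by linarith) (by linarith) h'
    linarith
  refine ⟨π, ?_⟩
  intro i j henv a ha
  unfold Envies at henv
  have haU : a ∈ (univ : Finset α) := mem_univ a
  -- erase sums
  have herase : ∀ (W : α → ℝ), ∑ x ∈ univ.erase a, W x = (∑ x, W x) - W a := by
    intro W; exact Finset.sum_erase_eq_sub haU
  cases i <;> cases j
  · -- false false : no self-envy
    exfalso
    have : swapAlloc false false π = π := by
      funext x; simp [swapAlloc]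
    rw [this] at henv
    exact lt_irrefl _ henv
  · -- false envies true
    rw [hswapFT] at henv ha ⊢
    have hvalπ : ∀ S : Finset α, alval V false π S = ∑ x ∈ S, V true (!(π x)) x := by
      intro S; unfold alval; exact Finset.sum_congr rfl fun x _ => hVfalse _ _
    have hvalsw : ∀ S : Finset α,
        alval V false (fun x => !(π x)) S = ∑ x ∈ S, V true (π x) x := by
      intro S; unfold alval
      refine Finset.sum_congr rfl fun x _ => ?_
      rw [hVfalse, Bool.not_not]
    have hdiff : alval V false π univ - alval V false (fun x => !(π x)) univ = -(D π) := by
      rw [hvalπ, hvalsw, hD]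
      simp only [hf]
      rw [← Finset.sum_sub_distrib, ← Finset.sum_neg_distrib]
      exact Finset.sum_congr rfl fun x _ => by ring
    have hdiffe : alval V false π (univ.erase a) -
        alval V false (fun x => !(π x)) (univ.erase a) = -(D π) + f π a := by
      rw [hvalπ, hvalsw, herase, herase]
      have := hdiff
      rw [hvalπ, hvalsw] at this
      rw [hf]; simp only []
      linarith [this]
    have hD0 : 0 < D π := by
      have : alval V false π univ - alval V false (fun x => !(π x)) univ < 0 := by
        linarith [henv]
      rw [hdiff] at this; linarith
    have hfa : 0 < f π a := by
      rw [hdiff, hdiffe] at ha; linarith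
    have := keygt (D π) (f π a) hD0 hfa (hkey a)
    linarith [hdiffe, this]
  · -- true envies false
    rw [hswapTF] at henv ha ⊢
    have hdiff : alval V true π univ - alval V true (fun x => !(π x)) univ = D π := by
      unfold alval
      rw [hD, ← Finset.sum_sub_distrib]
    have hdiffe : alval V true π (univ.erase a) -
        alval V true (fun x => !(π x)) (univ.erase a) = D π - f π a := by
      unfold alval
      rw [herase, herase]
      have h2 := hdiff
      unfold alval at h2
      simp only [hf]
      linarith [h2]
    have hD0 : D π < 0 := by
      have : alval V true π univ - alval V true (fun x => !(π x)) univ < 0 := by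
        linarith [henv]
      rwa [hdiff] at this
    have hfa : f π a < 0 := by
      rw [hdiff, hdiffe] at ha; linarith
    have := keylt (D π) (f π a) hD0 hfa (hkey a)
    linarith [hdiffe, this]
  · -- true true : no self-envy
    exfalso
    have : swapAlloc true true π = π := by
      funext x; simp [swapAlloc]
    rw [this] at henv
    exact lt_irrefl _ henv
end
end

section
/- For any two agents with additive valuations with externalities, there always exists an EF1 allocation of the items between them. -/
open Finset

noncomputable section

section Aux
variable {α : Type*} [Fintype α] [DecidableEq α]

/-- Net advantage of bundle `S` (over its complement) for linear value `d`. -/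
def Gv (d : α → ℝ) (S : Finset α) : ℝ := ∑ a ∈ S, d a - ∑ a ∈ Sᶜ, d a

lemma Gv_compl (d : α → ℝ) (S : Finset α) : Gv d Sᶜ = -Gv d S := by
  simp [Gv]

lemma Gv_erase (d : α → ℝ) {S : Finset α} {a : α} (h : a ∈ S) :
    Gv d (S.erase a) = Gv d S - 2 * d a := by
  have h2 : (S.erase a)ᶜ = insert a Sᶜ := by
    ext x
    by_cases hx : x = a <;> simp [hx, Finset.mem_erase, h]
  have ha : a ∉ Sᶜ := by simp [h]
  rw [Gv, Gv, Finset.sum_erase_eq_sub h, h2, Finset.sum_insert ha]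
  ring

lemma Gv_insert (d : α → ℝ) {S : Finset α} {a : α} (h : a ∉ S) :
    Gv d (insert a S) = Gv d S + 2 * d a := by
  have h2 : (insert a S)ᶜ = Sᶜ.erase a := by
    ext x
    by_cases hx : x = a <;> simp [hx, h]
  have ha : a ∈ Sᶜ := by simp [h]
  rw [Gv, Gv, Finset.sum_insert h, h2, Finset.sum_erase_eq_sub ha]
  ring

lemma exists_good (d : α → ℝ) :
    ∃ S : Finset α, 0 ≤ Gv d S ∧
      (Gv d S = 0 ∨ ∃ a, (a ∈ S ∧ Gv d S ≤ d a) ∨ (a ∉ S ∧ Gv d S ≤ -d a)) := by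
  obtain ⟨S, -, hmin⟩ := Finset.exists_min_image (univ : Finset (Finset α))
    (fun S => |Gv d S|) ⟨∅, mem_univ _⟩
  have hmin' : ∀ U : Finset α, |Gv d S| ≤ |Gv d U| := fun U => hmin U (mem_univ _)
  -- choose orientation with nonneg Gv
  obtain ⟨T, hT0, hTmin⟩ : ∃ T : Finset α, 0 ≤ Gv d T ∧ ∀ U : Finset α, |Gv d T| ≤ |Gv d U| := by
    rcases le_or_gt 0 (Gv d S) with h0 | h0
    · exact ⟨S, h0, hmin'⟩
    · refine ⟨Sᶜ, by rw [Gv_compl]; linarith, ?_⟩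
      intro U
      rw [Gv_compl, abs_neg]
      exact hmin' U
  refine ⟨T, hT0, ?_⟩
  by_contra hcon
  push_neg at hcon
  obtain ⟨hne, hall⟩ := hcon
  have hpos : 0 < Gv d T := lt_of_le_of_ne hT0 (Ne.symm hne)
  have habs : |Gv d T| = Gv d T := abs_of_pos hpos
  have h1 : ∀ a ∈ T, d a ≤ 0 := by
    intro a ha
    by_contra hda
    push_neg at hda
    have hlt : d a < Gv d T := (hall a).1 ha
    have := hTmin (T.erase a)
    rw [Gv_erase d ha, habs] at this
    have : Gv d T ≤ |Gv d T - 2 * d a| := this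
    rcases abs_cases (Gv d T - 2 * d a) with ⟨he, -⟩ | ⟨he, -⟩ <;> linarith [he ▸ this]
  have h2 : ∀ a ∉ T, 0 ≤ d a := by
    intro a ha
    by_contra hda
    push_neg at hda
    have hlt : -d a < Gv d T := (hall a).2 ha
    have := hTmin (insert a T)
    rw [Gv_insert d ha, habs] at this
    have : Gv d T ≤ |Gv d T + 2 * d a| := this
    rcases abs_cases (Gv d T + 2 * d a) with ⟨he, -⟩ | ⟨he, -⟩ <;> linarith [he ▸ this]
  have hs1 : ∑ a ∈ T, d a ≤ 0 := Finset.sum_nonpos h1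
  have hs2 : 0 ≤ ∑ a ∈ Tᶜ, d a := Finset.sum_nonneg (fun a ha => h2 a (by simpa using ha))
  have : Gv d T ≤ 0 := by rw [Gv]; linarith
  linarith

lemma swap_ne (i j : Bool) (h : i ≠ j) (b : Bool) : Equiv.swap i j b = !b := by
  cases i <;> cases j <;> cases b <;>
    simp_all [Equiv.swap_apply_left, Equiv.swap_apply_right]

lemma sum_ite_univ (d : α → ℝ) (S : Finset α) :
    ∑ a : α, (if a ∈ S then d a else -d a) = Gv d S := by
  rw [← Finset.sum_filter_add_sum_filter_not univ (· ∈ S)]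
  simp [Gv, Finset.filter_mem_eq_inter, sub_eq_add_neg]
  congr 1
  · apply Finset.sum_congr (by simp [Finset.filter_mem_eq_inter]) (fun x hx => by simp_all)
  · rw [← Finset.sum_neg_distrib]
    apply Finset.sum_congr
    · ext x; simp
    · intro x hx; simp_all


lemma swapAlloc_self {α N : Type*} [DecidableEq N] (i : N) (π : α → N) :
    swapAlloc i i π = π := by
  funext a
  simp [swapAlloc]

lemma key_sub {α : Type*} [Fintype α] [DecidableEq α] (V : Bool → Bool → α → ℝ)
    (i : Bool) (S T : Finset α) :
    alval V i (fun a => decide (a ∈ S)) T - alval V i (fun a => !decide (a ∈ S)) T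
      = ∑ a ∈ T, (if a ∈ S then (V i true a - V i false a)
          else -(V i true a - V i false a)) := by
  rw [alval, alval, ← Finset.sum_sub_distrib]
  apply Finset.sum_congr rfl
  intro a _
  by_cases h : a ∈ S <;> simp [h]

lemma sum_ite_sdiff_singleton {α : Type*} [Fintype α] [DecidableEq α]
    (d : α → ℝ) (S : Finset α) (b : α) :
    ∑ a ∈ univ \ {b}, (if a ∈ S then d a else -d a)
      = Gv d S - (if b ∈ S then d b else -d b) := by
  rw [← Finset.erase_eq, Finset.sum_erase_eq_sub (mem_univ b), sum_ite_univ]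

end Aux

/-- For any two agents with additive valuations with externalities,
there always exists an EF1 allocation of the items between them. -/
theorem ef1_exists_two_agents {α : Type*} [Fintype α] [DecidableEq α]
    (V : Bool → Bool → α → ℝ) :
    ∃ π : α → Bool, EF1 V π := by
  classical
  obtain ⟨S, hS0, hSalt⟩ := exists_good (fun a => V true true a - V true false a)
  by_cases hf : 0 ≤ Gv (fun a => V false true a - V false false a) S
  · -- give S to agent `true`
    refine ⟨fun a => decide (a ∈ S), ?_⟩
    intro i j
    by_cases hij : i = j
    · subst hij
      exact ⟨∅, by simp, by rw [swapAlloc_self]⟩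
    · have hswap : swapAlloc i j (fun a => decide (a ∈ S)) = fun a => !decide (a ∈ S) :=
        funext fun a => swap_ne i j hij _
      refine ⟨∅, by simp, ?_⟩
      rw [hswap, Finset.sdiff_empty]
      have hkey := key_sub V i S univ
      rw [sum_ite_univ] at hkey
      cases i
      · linarith
      · linarith
  · -- give Sᶜ to agent `true`
    push_neg at hf
    refine ⟨fun a => decide (a ∈ Sᶜ), ?_⟩
    intro i j
    by_cases hij : i = j
    · subst hij
      exact ⟨∅, by simp, by rw [swapAlloc_self]⟩
    · have hswap : swapAlloc i j (fun a => decide (a ∈ Sᶜ)) = fun a => !decide (a ∈ Sᶜ) :=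
        funext fun a => swap_ne i j hij _
      cases i
      · -- agent false: no envy at all
        refine ⟨∅, by simp, ?_⟩
        rw [hswap, Finset.sdiff_empty]
        have hkey := key_sub V false Sᶜ univ
        rw [sum_ite_univ, Gv_compl] at hkey
        linarith
      · -- agent true
        rcases hSalt with h0 | ⟨a, ha⟩
        · refine ⟨∅, by simp, ?_⟩
          rw [hswap, Finset.sdiff_empty]
          have hkey := key_sub V true Sᶜ univ
          rw [sum_ite_univ, Gv_compl] at hkey
          linarith
        · refine ⟨{a}, by simp, ?_⟩
          rw [hswap]
          have hkey := key_sub V true Sᶜ (univ \ {a})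
          rw [sum_ite_sdiff_singleton, Gv_compl] at hkey
          rcases ha with ⟨haS, hle⟩ | ⟨haS, hle⟩
          · have hac : a ∉ Sᶜ := by simp [haS]
            rw [if_neg hac] at hkey
            linarith
          · have hac : a ∈ Sᶜ := by simp [haS]
            rw [if_pos hac] at hkey
            linarith
end
end

section
/- Under additive valuations with externalities, every EFX allocation is EF1. -/
open Finset

noncomputable section

/-- Under additive valuations with externalities, every EFX allocation is EF1. -/
theorem efx_implies_ef1 {α N : Type*} [Fintype α] [DecidableEq α] [DecidableEq N]
    (V : N → N → α → ℝ) (π : α → N) (h : EFX V π) : EF1 V π := by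
  intro i j
  by_cases he : Envies V π i j
  · -- sum of differences is negative, so some term is negative
    have hsum : ∑ a : α, (V i (π a) a - V i (swapAlloc i j π a) a) < 0 := by
      have := he
      unfold Envies alval at this
      rw [Finset.sum_sub_distrib]
      linarith
    obtain ⟨a, _, ha⟩ := Finset.exists_lt_of_sum_lt (by simpa using hsum :
      ∑ a : α, (V i (π a) a - V i (swapAlloc i j π a) a) < ∑ _a : α, (0:ℝ))
    refine ⟨{a}, by simp, ?_⟩
    have hdiff : alval V i π (univ.erase a) - alval V i (swapAlloc i j π) (univ.erase a) >
        alval V i π univ - alval V i (swapAlloc i j π) univ := by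
      unfold alval
      rw [Finset.sum_erase_eq_sub (mem_univ a), Finset.sum_erase_eq_sub (mem_univ a)]
      linarith
    have := h i j he a hdiff
    simpa [Finset.sdiff_singleton_eq_erase] using this
  · exact ⟨∅, by simp, by unfold Envies at he; push_neg at he; simpa using he⟩
end
end

section
/- There is an instance with three agents and seven items, with additive valuations with externalities, that admits no EFX allocation. Concretely: items a_1,…,a_6 each give agent i value 21 if assigned to i and 16 otherwise; item g gives agent 1 values (17,16,16), agent 2 values (16,24,0), and agent 3 values (16,0,24) when assigned to agents 1, 2, 3 respectively. No complete allocation of these seven items is EFX. -/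
open Finset

noncomputable section

/-- The valuations of the counterexample: items `0,…,5` are `a_1,…,a_6`
(value 21 if kept, 16 if given away, for everyone), item `6` is `g` with values
`(17,16,16)`, `(16,24,0)`, `(16,0,24)` for agents `0`, `1`, `2` respectively. -/
def cexV : Fin 3 → Fin 3 → Fin 7 → ℝ := fun i j a =>
  if a = 6 then
    if i = 0 then (if j = 0 then 17 else 16)
    else if i = 1 then (if j = 0 then 16 else if j = 1 then 24 else 0)
    else (if j = 0 then 16 else if j = 2 then 24 else 0)
  else
    if i = j then 21 else 16

/-! ### Auxiliary computable (ℕ-valued) model -/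

/-- ℕ-valued copy of the valuations (arguments as raw naturals). -/
def cexN (i j a : ℕ) : ℕ :=
  if a = 6 then
    if i = 0 then (if j = 0 then 17 else 16)
    else if i = 1 then (if j = 0 then 16 else if j = 1 then 24 else 0)
    else (if j = 0 then 16 else if j = 2 then 24 else 0)
  else
    if i = j then 21 else 16

/-- ℕ-valued swap. -/
def swN (i j x : ℕ) : ℕ := if x = i then j else if x = j then i else x

/-- Total value of an allocation given as `f : ℕ → ℕ`. -/
def totN (f : ℕ → ℕ) (i : ℕ) : ℕ :=
  cexN i (f 0) 0 + cexN i (f 1) 1 + cexN i (f 2) 2 + cexN i (f 3) 3 +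
    cexN i (f 4) 4 + cexN i (f 5) 5 + cexN i (f 6) 6

def itemB (f : ℕ → ℕ) (i j a : ℕ) : Bool :=
  decide (cexN i (swN i j (f a)) a > cexN i (f a) a)
    && decide (totN f i + cexN i (swN i j (f a)) a < totN (fun k => swN i j (f k)) i + cexN i (f a) a)

def exA (p : ℕ → Bool) : Bool := p 0 || p 1 || p 2 || p 3 || p 4 || p 5 || p 6

def pairB (f : ℕ → ℕ) (i j : ℕ) : Bool :=
  decide (totN f i < totN (fun k => swN i j (f k)) i) && exA (itemB f i j)

def caseB (m : ℕ) : Bool :=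
  let f := fun k => m / 3 ^ k % 3
  pairB f 1 2 || pairB f 2 1 || pairB f 1 0 || pairB f 0 1 || pairB f 0 2 || pairB f 2 0

set_option maxRecDepth 1000000 in
set_option maxHeartbeats 40000000 in
lemma allCases : (List.range 2187).all caseB = true := by decide

lemma caseB_true {m : ℕ} (hm : m < 2187) : caseB m = true := by
  have h := allCases
  rw [List.all_eq_true] at h
  exact h m (List.mem_range.mpr hm)

/-! ### Bridging lemmas -/

lemma cexV_eq (i j : Fin 3) (a : Fin 7) : cexV i j a = (cexN i.val j.val a.val : ℝ) := by
  have h7 : a = 6 ↔ a.val = 6 := by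
    rw [Fin.ext_iff, show ((6:Fin 7)).val = 6 from rfl]
  have h0 : i = 0 ↔ i.val = 0 := by rw [Fin.ext_iff]; norm_num
  have h1 : i = 1 ↔ i.val = 1 := by rw [Fin.ext_iff]; norm_num
  have hj0 : j = 0 ↔ j.val = 0 := by rw [Fin.ext_iff]; norm_num
  have hj1 : j = 1 ↔ j.val = 1 := by rw [Fin.ext_iff]; norm_num
  have hj2 : j = 2 ↔ j.val = 2 := by rw [Fin.ext_iff]; norm_num
  have hij : i = j ↔ i.val = j.val := Fin.ext_iff
  unfold cexV cexN
  simp only [h7, h0, h1, hj0, hj1, hj2, hij]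
  split_ifs <;> norm_num

lemma swN_eq (i j x : Fin 3) : ((Equiv.swap i j) x).val = swN i.val j.val x.val := by
  unfold swN
  rw [Equiv.swap_apply_def]
  have hx : x = i ↔ x.val = i.val := Fin.ext_iff
  have hx' : x = j ↔ x.val = j.val := Fin.ext_iff
  simp only [hx, hx']
  split_ifs <;> rfl

lemma alval_univ_eq (i : Fin 3) (ρ : Fin 7 → Fin 3) (f : ℕ → ℕ)
    (hf : ∀ k : Fin 7, f k.val = (ρ k).val) :
    alval cexV i ρ univ = (totN f i.val : ℝ) := by
  have h : ∀ k : Fin 7, cexV i (ρ k) k = (cexN i.val (f k.val) k.val : ℝ) := by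
    intro k; rw [hf k]; exact cexV_eq i (ρ k) k
  unfold alval totN
  rw [Fin.sum_univ_seven]
  rw [h 0, h 1, h 2, h 3, h 4, h 5, h 6]
  push_cast
  rfl

lemma alval_erase_eq (i : Fin 3) (ρ : Fin 7 → Fin 3) (a : Fin 7) :
    alval cexV i ρ (univ.erase a) = alval cexV i ρ univ - cexV i (ρ a) a := by
  unfold alval
  rw [Finset.sum_erase_eq_sub (mem_univ a)]

/-- Soundness of `pairB` at the level of the real-valued model. -/
lemma pairB_sound (π : Fin 7 → Fin 3) (i j : Fin 3) (f : ℕ → ℕ)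
    (hf : ∀ k : Fin 7, f k.val = (π k).val)
    (h : pairB f i.val j.val = true) :
    Envies cexV π i j ∧ ∃ a : Fin 7,
      alval cexV i π (univ.erase a) - alval cexV i (swapAlloc i j π) (univ.erase a) >
        alval cexV i π univ - alval cexV i (swapAlloc i j π) univ ∧
      ¬ alval cexV i (swapAlloc i j π) (univ.erase a) ≤ alval cexV i π (univ.erase a) := by
  have hg : ∀ k : Fin 7, (fun x => swN i.val j.val (f x)) k.val = ((swapAlloc i j π) k).val := by
    intro k
    show swN i.val j.val (f k.val) = (Equiv.swap i j (π k)).val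
    rw [hf k, swN_eq]
  have hU : alval cexV i π univ = (totN f i.val : ℝ) := alval_univ_eq i π f hf
  have hU' : alval cexV i (swapAlloc i j π) univ
      = (totN (fun x => swN i.val j.val (f x)) i.val : ℝ) :=
    alval_univ_eq i (swapAlloc i j π) _ hg
  unfold pairB at h
  rw [Bool.and_eq_true, decide_eq_true_eq] at h
  obtain ⟨hE, hA⟩ := h
  have hEnv : Envies cexV π i j := by
    unfold Envies; rw [hU, hU']; exact_mod_cast hE
  refine ⟨hEnv, ?_⟩
  unfold exA at hA
  -- extract the witness item
  have hwit : ∃ a : Fin 7, itemB f i.val j.val a.val = true := by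
    simp only [Bool.or_eq_true] at hA
    rcases hA with ((((((h|h)|h)|h)|h)|h)|h)
    exacts [⟨0, h⟩, ⟨1, h⟩, ⟨2, h⟩, ⟨3, h⟩, ⟨4, h⟩, ⟨5, h⟩, ⟨6, h⟩]
  obtain ⟨a, ha⟩ := hwit
  unfold itemB at ha
  rw [Bool.and_eq_true, decide_eq_true_eq, decide_eq_true_eq] at ha
  obtain ⟨h1, h2⟩ := ha
  have ht : cexV i (π a) a = (cexN i.val (f a.val) a.val : ℝ) := by
    rw [hf a]; exact cexV_eq i (π a) a
  have ht' : cexV i ((swapAlloc i j π) a) a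
      = (cexN i.val (swN i.val j.val (f a.val)) a.val : ℝ) := by
    rw [show swN i.val j.val (f a.val) = ((swapAlloc i j π) a).val from hg a]
    exact cexV_eq i ((swapAlloc i j π) a) a
  have h1' : (cexN i.val (f a.val) a.val : ℝ) < (cexN i.val (swN i.val j.val (f a.val)) a.val : ℝ) := by
    exact_mod_cast h1
  have h2' : ((totN f i.val : ℝ) + (cexN i.val (swN i.val j.val (f a.val)) a.val : ℝ))
      < ((totN (fun x => swN i.val j.val (f x)) i.val : ℝ) + (cexN i.val (f a.val) a.val : ℝ)) := by
    exact_mod_cast h2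
  refine ⟨a, ?_, ?_⟩
  · rw [alval_erase_eq, alval_erase_eq, hU, hU', ht, ht']
    linarith
  · rw [alval_erase_eq, alval_erase_eq, hU, hU', ht, ht']
    push_neg
    linarith

set_option maxHeartbeats 4000000 in
/-- There is an instance with three agents and seven items, with additive
valuations with externalities, that admits no EFX allocation: no complete allocation of
the seven items above is EFX. -/
theorem no_efx_three_agents : ∀ π : Fin 7 → Fin 3, ¬ EFX cexV π := by
  intro π hEFX
  obtain ⟨m, hm, hf⟩ : ∃ m : ℕ, m < 2187 ∧ ∀ k : Fin 7, m / 3 ^ k.val % 3 = (π k).val := by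
    refine ⟨(π 0).val + 3 * (π 1).val + 9 * (π 2).val + 27 * (π 3).val
      + 81 * (π 4).val + 243 * (π 5).val + 729 * (π 6).val, ?_, ?_⟩
    · have h0 := (π 0).isLt; have h1 := (π 1).isLt; have h2 := (π 2).isLt
      have h3 := (π 3).isLt; have h4 := (π 4).isLt; have h5 := (π 5).isLt
      have h6 := (π 6).isLt
      omega
    · have h0 := (π 0).isLt; have h1 := (π 1).isLt; have h2 := (π 2).isLt
      have h3 := (π 3).isLt; have h4 := (π 4).isLt; have h5 := (π 5).isLt
      have h6 := (π 6).isLt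
      have key : ∀ a b c d e f g : ℕ, a < 3 → b < 3 → c < 3 → d < 3 → e < 3 → f < 3 → g < 3 →
          (a + 3*b + 9*c + 27*d + 81*e + 243*f + 729*g) / 1 % 3 = a ∧
          (a + 3*b + 9*c + 27*d + 81*e + 243*f + 729*g) / 3 % 3 = b ∧
          (a + 3*b + 9*c + 27*d + 81*e + 243*f + 729*g) / 9 % 3 = c ∧
          (a + 3*b + 9*c + 27*d + 81*e + 243*f + 729*g) / 27 % 3 = d ∧
          (a + 3*b + 9*c + 27*d + 81*e + 243*f + 729*g) / 81 % 3 = e ∧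
          (a + 3*b + 9*c + 27*d + 81*e + 243*f + 729*g) / 243 % 3 = f ∧
          (a + 3*b + 9*c + 27*d + 81*e + 243*f + 729*g) / 729 % 3 = g := by
        intro a b c d e f g ha hb hc hd he hg hh
        omega
      obtain ⟨k0, k1, k2, k3, k4, k5, k6⟩ := key _ _ _ _ _ _ _ h0 h1 h2 h3 h4 h5 h6
      intro k
      fin_cases k
      · exact (by ring_nf at k0 ⊢; exact k0)
      · exact (by ring_nf at k1 ⊢; exact k1)
      · exact (by ring_nf at k2 ⊢; exact k2)
      · exact (by ring_nf at k3 ⊢; exact k3)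
      · exact (by ring_nf at k4 ⊢; exact k4)
      · exact (by ring_nf at k5 ⊢; exact k5)
      · exact (by ring_nf at k6 ⊢; exact k6)
  have hc := caseB_true hm
  unfold caseB at hc
  simp only [Bool.or_eq_true] at hc
  have main : ∃ i j : Fin 3, Envies cexV π i j ∧ ∃ a : Fin 7,
      alval cexV i π (univ.erase a) - alval cexV i (swapAlloc i j π) (univ.erase a) >
        alval cexV i π univ - alval cexV i (swapAlloc i j π) univ ∧
      ¬ alval cexV i (swapAlloc i j π) (univ.erase a) ≤ alval cexV i π (univ.erase a) := by
    rcases hc with ((((h|h)|h)|h)|h)|h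
    · exact ⟨1, 2, pairB_sound π 1 2 _ hf h⟩
    · exact ⟨2, 1, pairB_sound π 2 1 _ hf h⟩
    · exact ⟨1, 0, pairB_sound π 1 0 _ hf h⟩
    · exact ⟨0, 1, pairB_sound π 0 1 _ hf h⟩
    · exact ⟨0, 2, pairB_sound π 0 2 _ hf h⟩
    · exact ⟨2, 0, pairB_sound π 2 0 _ hf h⟩
  obtain ⟨i, j, henvy, a, hcond, hviol⟩ := main
  exact hviol (hEFX i j henvy a hcond)
end
end

section
/- For three agents with binary valuations satisfying the no-chore assumption, if for every item a there exists an agent i such that V_i(i,a)=V_i(j,a) for all j (i.e., assigning a anywhere never makes i envious), then an EF1 allocation exists. -/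
open Finset

noncomputable section

/-!
With binary no-chore valuations, `i` loses value when an item `a` goes to `j` instead of to `i`
exactly when `V i j a = 0 < 1 = V i i a` (`i` covets `a` against `j`). Swapping bundles with `j`
therefore changes `i`'s value by the number of items of `j`'s bundle that `i` covets against `j`
minus the number of such items in `i`'s own bundle, and `i` is EF1 towards `j` as soon as this
difference is at most one.

Give every item to one of the two agents other than an agent `k` indifferent to it, splitting as
in the two-agent case: items both of them covet are shared half and half, every other item goes
to the agent who covets it. An item of `j` coveted by `i` is assigned away from `i` and from `j`
(`i` is not indifferent to it, and it is held by `j`), so it is one of the items assigned away from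
the third agent; among these the two-agent split bounds the difference by one.
-/

section Covets

variable {α N : Type*}

abbrev Covets (V : N → N → α → ℝ) (i j : N) (a : α) : Prop := V i j a < V i i a

lemma Covets.ne {V : N → N → α → ℝ} {i j : N} {a : α} (h : Covets V i j a) : i ≠ j := by
  rintro rfl
  exact lt_irrefl _ h

variable [DecidableEq N] {V : N → N → α → ℝ} {i : N}

lemma sub_eq_ite_covets (hbin : ∀ k a, V i k a = 0 ∨ V i k a = 1)
    (hnochore : ∀ k a, V i k a ≤ V i i a) (j : N) (π : α → N) (a : α) :
    V i (swapAlloc i j π a) a - V i (π a) a =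
      (if π a = j ∧ Covets V i j a then 1 else 0) -
        (if π a = i ∧ Covets V i j a then 1 else 0) := by
  have hj := hnochore j a
  rcases hbin i a with hii | hii <;> rcases hbin j a with hij | hij <;>
    by_cases hi : π a = i <;> by_cases hj' : π a = j <;>
    simp_all [swapAlloc, Equiv.swap_apply_of_ne_of_ne] <;> linarith

variable [DecidableEq α]

lemma alval_swapAlloc_sub_alval (hbin : ∀ k a, V i k a = 0 ∨ V i k a = 1)
    (hnochore : ∀ k a, V i k a ≤ V i i a) (j : N) (π : α → N) (S : Finset α) :
    alval V i (swapAlloc i j π) S - alval V i π S =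
      #{a ∈ S | π a = j ∧ Covets V i j a} - #{a ∈ S | π a = i ∧ Covets V i j a} := by
  simp only [alval, ← sum_sub_distrib, sub_eq_ite_covets hbin hnochore]
  rw [sum_sub_distrib, sum_boole, sum_boole]

lemma exists_ef1_of_card_covets_le [Fintype α] (hbin : ∀ k a, V i k a = 0 ∨ V i k a = 1)
    (hnochore : ∀ k a, V i k a ≤ V i i a) {j : N} {π : α → N}
    (h : #{a | π a = j ∧ Covets V i j a} ≤ #{a | π a = i ∧ Covets V i j a} + 1) :
    ∃ C : Finset α, #C ≤ 1 ∧
      alval V i (swapAlloc i j π) (univ \ C) ≤ alval V i π (univ \ C) := by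
  suffices ∃ C : Finset α, #C ≤ 1 ∧
      #{a ∈ univ \ C | π a = j ∧ Covets V i j a} ≤ #{a ∈ univ \ C | π a = i ∧ Covets V i j a} by
    obtain ⟨C, hC, hle⟩ := this
    refine ⟨C, hC, ?_⟩
    rw [← sub_nonpos, alval_swapAlloc_sub_alval hbin hnochore, sub_nonpos]
    exact_mod_cast hle
  rcases eq_empty_or_nonempty {a | π a = j ∧ Covets V i j a} with hT | ⟨c, hc⟩
  · exact ⟨∅, by simp, by simp only [sdiff_empty, hT, card_empty, zero_le]⟩
  · have hci : c ∉ ({a | π a = i ∧ Covets V i j a} : Finset α) := by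
      intro hci
      obtain ⟨hci, -⟩ := (mem_filter.mp hci).2
      obtain ⟨hcj, hcov⟩ := (mem_filter.mp hc).2
      exact hcov.ne (hci.symm.trans hcj)
    refine ⟨{c}, (card_singleton c).le, ?_⟩
    rw [sdiff_singleton_eq_erase, filter_erase, filter_erase, card_erase_of_mem hc,
      erase_eq_of_notMem hci]
    omega

end Covets

lemma exists_split_card_covets_le {α N : Type*} [DecidableEq α] [DecidableEq N]
    (V : N → N → α → ℝ) (s : Finset α) (p q : N) :
    ∃ σ : α → N, (∀ a, σ a = p ∨ σ a = q) ∧ ∀ i j, (i = p ∧ j = q ∨ i = q ∧ j = p) →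
      #{a ∈ s | σ a = j ∧ Covets V i j a} ≤ #{a ∈ s | σ a = i ∧ Covets V i j a} + 1 := by
  set c : Finset α := {a ∈ s | Covets V p q a ∧ Covets V q p a}
  obtain ⟨H, hHc, hH⟩ := exists_subset_card_eq (Nat.div_le_self #c 2)
  have hcH := card_sdiff_of_subset hHc
  set σ : α → N := fun a => if a ∈ H ∨ (Covets V p q a ∧ ¬Covets V q p a) then p else q
    with hσ_def
  refine ⟨σ, fun a => ite_eq_or_eq _ _ _, ?_⟩
  rintro i j (⟨hi, hj⟩ | ⟨hi, hj⟩) <;> subst i j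
  · have hle : #{a ∈ s | σ a = q ∧ Covets V p q a} ≤ #(c \ H) := by
      refine card_le_card fun a ha => ?_
      obtain ⟨has, hσ, hcov⟩ := mem_filter.mp ha
      simp only [hσ_def] at hσ
      split_ifs at hσ with hcond
      · exact absurd hσ hcov.ne
      · simp only [not_or, not_and, not_not] at hcond
        exact mem_sdiff.mpr ⟨mem_filter.mpr ⟨has, hcov, hcond.2 hcov⟩, hcond.1⟩
    have hge : #H ≤ #{a ∈ s | σ a = p ∧ Covets V p q a} := by
      refine card_le_card fun a ha => ?_
      obtain ⟨has, hcov, -⟩ := mem_filter.mp (hHc ha)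
      exact mem_filter.mpr ⟨has, if_pos (Or.inl ha), hcov⟩
    omega
  · have hle : #{a ∈ s | σ a = p ∧ Covets V q p a} ≤ #H := by
      refine card_le_card fun a ha => ?_
      obtain ⟨-, hσ, hcov⟩ := mem_filter.mp ha
      simp only [hσ_def] at hσ
      split_ifs at hσ with hcond
      · exact hcond.resolve_right fun h => h.2 hcov
      · exact absurd hσ hcov.ne
    have hge : #(c \ H) ≤ #{a ∈ s | σ a = q ∧ Covets V q p a} := by
      refine card_le_card fun a ha => ?_
      obtain ⟨hac, haH⟩ := mem_sdiff.mp ha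
      obtain ⟨has, -, hcov⟩ := mem_filter.mp hac
      exact mem_filter.mpr ⟨has, if_neg (not_or.mpr ⟨haH, fun h => h.2 hcov⟩), hcov⟩
    omega

lemma fin3_add_one_ne (k : Fin 3) : k + 1 ≠ k := by revert k; decide

lemma fin3_add_two_ne (k : Fin 3) : k + 2 ≠ k := by revert k; decide

-- The agents of `Fin 3` sum to `0`, so the one distinct from `i` and `j` is `-(i + j)`.
lemma fin3_ne_and_ne_iff {i j : Fin 3} (hij : i ≠ j) (x : Fin 3) :
    x ≠ i ∧ x ≠ j ↔ x = -(i + j) := by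
  revert i j x; decide

lemma fin3_pair_of_ne {i j : Fin 3} (hij : i ≠ j) :
    i = -(i + j) + 1 ∧ j = -(i + j) + 2 ∨ i = -(i + j) + 2 ∧ j = -(i + j) + 1 := by
  revert i j; decide

lemma exists_alloc_card_covets_le {α : Type*} [Fintype α] [DecidableEq α]
    (V : Fin 3 → Fin 3 → α → ℝ) (f : α → Fin 3) (hf : ∀ a j, ¬Covets V (f a) j a) :
    ∃ π : α → Fin 3, ∀ i j,
      #{a | π a = j ∧ Covets V i j a} ≤ #{a | π a = i ∧ Covets V i j a} + 1 := by
  choose σ hσ hσle using fun k => exists_split_card_covets_le V {a | f a = k} (k + 1) (k + 2)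
  refine ⟨fun a => σ (f a) a, fun i j => ?_⟩
  beta_reduce
  by_cases hij : i = j
  · subst hij; omega
  set k := -(i + j)
  have hle : #{a | σ (f a) a = j ∧ Covets V i j a} ≤
      #{a ∈ {a | f a = k} | σ k a = j ∧ Covets V i j a} := by
    refine card_le_card fun a ha => ?_
    obtain ⟨hσj, hcov⟩ := (mem_filter.mp ha).2
    have hfi : f a ≠ i := fun h => hf a j (h ▸ hcov)
    have hfj : f a ≠ j := fun h => by
      rcases hσ (f a) a with h' | h' <;> rw [h', h] at hσj
      exacts [fin3_add_one_ne _ hσj, fin3_add_two_ne _ hσj]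
    have hfk : f a = k := (fin3_ne_and_ne_iff hij _).mp ⟨hfi, hfj⟩
    simp_all
  have hge : #{a ∈ {a | f a = k} | σ k a = i ∧ Covets V i j a} ≤
      #{a | σ (f a) a = i ∧ Covets V i j a} := by
    refine card_le_card fun a ha => ?_
    simp_all
  have := hσle k i j (fin3_pair_of_ne hij)
  omega

/-- For three agents with binary valuations satisfying the no-chore
assumption, if for every item `a` there exists an agent `i` such that
`V i i a = V i j a` for all `j` (assigning `a` anywhere never makes `i` envious),
then an EF1 allocation exists. -/
theorem ef1_exists_three_agents_binary_nochore {α : Type*} [Fintype α] [DecidableEq α]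
    (V : Fin 3 → Fin 3 → α → ℝ)
    (hbin : ∀ i j a, V i j a = 0 ∨ V i j a = 1)
    (hnochore : ∀ i j a, V i j a ≤ V i i a)
    (hfree : ∀ a : α, ∃ i : Fin 3, ∀ j : Fin 3, V i j a = V i i a) :
    ∃ π : α → Fin 3, EF1 V π := by
  choose f hf using hfree
  obtain ⟨π, hπ⟩ := exists_alloc_card_covets_le V f fun a j => (hf a j).not_lt
  exact ⟨π, fun i j => exists_ef1_of_card_covets_le (hbin i) (hnochore i) (hπ i j)⟩
end
end

section
/- Envy-freeness does not imply Proportionality-Max even for two agents with no externalities: there is an instance with two agents and two items and an EF allocation in which some agent receives less than half of her total maximum value. For example, agent 1 values each item at −1 if she owns it and at 0 if it is owned by the other agent, agent 2 values everything at 0; giving each agent one item is EF but not PROP-Max for agent 1. -/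
open Finset

noncomputable section

/-- The valuations of the counterexample: agent 1 (= `true`) values each item at `−1`
when she owns it and `0` when the other agent owns it; agent 2 (= `false`) values
everything at `0`. -/
def cex8V : Bool → Bool → Fin 2 → ℝ := fun i j _ => if i = true ∧ j = true then -1 else 0

/-- The allocation giving each agent one item. -/
def cex8π : Fin 2 → Bool := fun a => a = 0

/-- Envy-freeness does not imply Proportionality-Max even for two agents
with no externalities: in the instance above, giving each agent one item is EF, but
agent 1 receives less than half of her total maximum value. -/
theorem ef_not_prop_max :
    (∀ i j : Bool, alval cex8V i (swapAlloc i j cex8π) univ ≤ alval cex8V i cex8π univ) ∧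
      alval cex8V true cex8π univ <
        (1 / 2 : ℝ) * ∑ a, max (cex8V true true a) (cex8V true false a) := by
  constructor
  · intro i j
    fin_cases i <;> fin_cases j <;>
      simp [alval, swapAlloc, cex8V, cex8π, Fin.sum_univ_two, Equiv.swap_apply_def] <;> norm_num
  · simp [alval, cex8V, cex8π, Fin.sum_univ_two]
end
end

section
/- Proportionality-Average implies General Fair Share: any allocation π satisfying V_i(π) ≥ (1/n)Σ_{a}Σ_{j} V_i(j,a) for all agents i also satisfies V_i(π) ≥ (1/n)Σ_a (V_i^max(a) − V_i^min(a)) + Σ_a V_i^min(a) for all i. -/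
open Finset

noncomputable section

lemma sup_add_inf_le {N : Type*} [Fintype N] [Nonempty N] (f : N → ℝ) :
    univ.sup' univ_nonempty f + ((Fintype.card N : ℝ) - 1) * univ.inf' univ_nonempty f
      ≤ ∑ j, f j := by
  classical
  obtain ⟨j0, -, hj0⟩ := exists_mem_eq_sup' (univ_nonempty (α := N)) f
  have h1 : ∑ j, f j = f j0 + ∑ j ∈ univ.erase j0, f j := by
    rw [← Finset.add_sum_erase _ f (mem_univ j0)]
  have h2 : ((Fintype.card N : ℝ) - 1) * univ.inf' univ_nonempty f
      ≤ ∑ j ∈ univ.erase j0, f j := by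
    have : ∀ j ∈ univ.erase j0, univ.inf' univ_nonempty f ≤ f j := fun j _ =>
      inf'_le _ (mem_univ j)
    calc ((Fintype.card N : ℝ) - 1) * univ.inf' univ_nonempty f
        = (univ.erase j0).card • univ.inf' univ_nonempty f := by
          rw [card_erase_of_mem (mem_univ j0), card_univ, nsmul_eq_mul]
          push_cast [Nat.cast_sub (Nat.one_le_iff_ne_zero.mpr Fintype.card_ne_zero)]
          ring_nf
      _ ≤ ∑ j ∈ univ.erase j0, f j := Finset.card_nsmul_le_sum _ _ _ this
  rw [h1, hj0]
  linarith

/-- Proportionality-Average implies General Fair Share: any allocation `π`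
satisfying `V_i(π) ≥ (1/n)·Σ_a Σ_j V_i(j,a)` for all agents `i` also satisfies
`V_i(π) ≥ (1/n)·Σ_a (V_i^max(a) − V_i^min(a)) + Σ_a V_i^min(a)` for all `i`. -/
theorem prop_ave_implies_gfs {α N : Type*} [Fintype α] [Fintype N] [Nonempty N]
    (V : N → N → α → ℝ) (π : α → N)
    (hPA : ∀ i : N,
      (1 / (Fintype.card N : ℝ)) * ∑ a, ∑ j, V i j a ≤ ∑ a, V i (π a) a) :
    ∀ i : N,
      (1 / (Fintype.card N : ℝ)) *
          ∑ a, (univ.sup' univ_nonempty (fun j => V i j a) -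
                univ.inf' univ_nonempty (fun j => V i j a)) +
        ∑ a, univ.inf' univ_nonempty (fun j => V i j a) ≤ ∑ a, V i (π a) a := by
  intro i
  refine le_trans ?_ (hPA i)
  have hn : (0 : ℝ) < (Fintype.card N : ℝ) := by
    exact_mod_cast Fintype.card_pos
  rw [mul_sum, ← sum_add_distrib, mul_sum]
  refine Finset.sum_le_sum fun a _ => ?_
  have h := sup_add_inf_le (fun j => V i j a)
  rw [div_mul_eq_mul_div, div_mul_eq_mul_div, one_mul, one_mul, div_add' _ _ _ hn.ne',
    div_le_div_iff₀ hn hn]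
  nlinarith [h]
end
end

section
/- General Fair Share implies Proportionality-Max under nonnegative minimum values: if an allocation π satisfies GFS and for each agent i we have Σ_{a∈A} V_i^min(a) ≥ 0, then V_i(π) ≥ (1/n)Σ_{a∈A} V_i^max(a) for every agent i. -/
open Finset

noncomputable section

/-- General Fair Share implies Proportionality-Max under nonnegative
minimum values: if an allocation `π` satisfies GFS and for each agent `i` we have
`Σ_a V_i^min(a) ≥ 0`, then `V_i(π) ≥ (1/n)·Σ_a V_i^max(a)` for every agent `i`. -/
theorem gfs_implies_prop_max {α N : Type*} [Fintype α] [Fintype N] [Nonempty N]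
    (V : N → N → α → ℝ) (π : α → N)
    (hGFS : ∀ i : N,
      (1 / (Fintype.card N : ℝ)) *
          ∑ a, (univ.sup' univ_nonempty (fun j => V i j a) -
                univ.inf' univ_nonempty (fun j => V i j a)) +
        ∑ a, univ.inf' univ_nonempty (fun j => V i j a) ≤ ∑ a, V i (π a) a)
    (hmin : ∀ i : N, 0 ≤ ∑ a, univ.inf' univ_nonempty (fun j => V i j a)) :
    ∀ i : N,
      (1 / (Fintype.card N : ℝ)) * ∑ a, univ.sup' univ_nonempty (fun j => V i j a) ≤
        ∑ a, V i (π a) a := by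
  intro i
  have hn : (1 : ℝ) ≤ (Fintype.card N : ℝ) := by
    exact_mod_cast Fintype.card_pos
  have h1 : 0 < (Fintype.card N : ℝ) := by linarith
  have hfrac : (1 / (Fintype.card N : ℝ)) ≤ 1 := by
    rw [div_le_one h1]; exact hn
  have hfpos : 0 < (1 / (Fintype.card N : ℝ)) := by positivity
  have key := hGFS i
  have hm := hmin i
  rw [Finset.sum_sub_distrib, mul_sub] at key
  have : (1 / (Fintype.card N : ℝ)) * ∑ a, univ.inf' univ_nonempty (fun j => V i j a)
      ≤ ∑ a, univ.inf' univ_nonempty (fun j => V i j a) := by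
    nlinarith
  linarith
end
end

section
/- Envy-freeness implies 2-Partial-Proportionality: if π is envy-free, then for any two agents i,j, V_i(i,π_i)+V_i(j,π_j) ≥ (1/2)·Σ_{a∈π_i∪π_j} (V_i(i,a)+V_i(j,a)). -/
open Finset

noncomputable section

/-- Envy-freeness implies 2-Partial-Proportionality: if `π` is envy-free,
then for any two distinct agents `i, j`,
`V_i(i,π_i) + V_i(j,π_j) ≥ (1/2)·Σ_{a ∈ π_i ∪ π_j} (V_i(i,a) + V_i(j,a))`. -/
theorem ef_implies_two_partial_prop {α N : Type*} [Fintype α] [DecidableEq α]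
    [DecidableEq N] (V : N → N → α → ℝ) (π : α → N)
    (hEF : ∀ i j : N, ∑ a, V i (Equiv.swap i j (π a)) a ≤ ∑ a, V i (π a) a) :
    ∀ i j : N, i ≠ j →
      (1 / 2 : ℝ) * ∑ a ∈ univ.filter (fun a => π a = i ∨ π a = j), (V i i a + V i j a) ≤
        (∑ a ∈ univ.filter (fun a => π a = i), V i i a) +
          ∑ a ∈ univ.filter (fun a => π a = j), V i j a := by
  intro i j hij
  have h := hEF i j
  set S := univ.filter (fun a => π a = i) with hS
  set T := univ.filter (fun a => π a = j) with hT
  have hdisj : Disjoint S T := by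
    simp only [hS, hT, disjoint_filter]
    intro a _ ha hb
    exact hij (ha ▸ hb.symm ▸ rfl)
  have hunion : univ.filter (fun a => π a = i ∨ π a = j) = S ∪ T := by
    simp [hS, hT, filter_or]
  -- split the EF inequality
  have split : ∀ g : α → ℝ, ∑ a, g a =
      ∑ a ∈ S, g a + ∑ a ∈ T, g a + ∑ a ∈ univ.filter (fun a => ¬(π a = i ∨ π a = j)), g a := by
    intro g
    rw [← sum_filter_add_sum_filter_not univ (fun a => π a = i ∨ π a = j) g, hunion,
      sum_union hdisj]
  rw [split, split] at h
  have hSs : ∀ a ∈ S, V i (Equiv.swap i j (π a)) a = V i j a := by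
    intro a ha
    simp only [hS, mem_filter] at ha
    rw [ha.2, Equiv.swap_apply_left]
  have hTs : ∀ a ∈ T, V i (Equiv.swap i j (π a)) a = V i i a := by
    intro a ha
    simp only [hT, mem_filter] at ha
    rw [ha.2, Equiv.swap_apply_right]
  have hRs : ∀ a ∈ univ.filter (fun a => ¬(π a = i ∨ π a = j)),
      V i (Equiv.swap i j (π a)) a = V i (π a) a := by
    intro a ha
    simp only [mem_filter] at ha
    rw [Equiv.swap_apply_of_ne_of_ne (fun h => ha.2 (Or.inl h)) (fun h => ha.2 (Or.inr h))]
  rw [sum_congr rfl hSs, sum_congr rfl hTs, sum_congr rfl hRs] at h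
  have hSi : ∀ a ∈ S, V i (π a) a = V i i a := by
    intro a ha
    simp only [hS, mem_filter] at ha
    rw [ha.2]
  have hTi : ∀ a ∈ T, V i (π a) a = V i j a := by
    intro a ha
    simp only [hT, mem_filter] at ha
    rw [ha.2]
  rw [sum_congr rfl hSi, sum_congr rfl hTi] at h
  rw [hunion, sum_union hdisj, sum_add_distrib, sum_add_distrib]
  linarith
end
end

section
/- In the Max-Min Round Robin analysis, if the issues are ordered a_1,…,a_m in decreasing order of β_i(·) and an agent takes the β_i-worst available issue in each of her p rounds (issues a_n, a_{2n}, …, a_{pn}), then her value satisfies V_i(π) − Σ_{a∈A} V_i^min(a) ≥ Σ_{k=1}^{p} β_i(a_{kn}); moreover β_i(a_1) + Σ_{k=1}^{p} β_i(a_{kn}) ≥ (1/n)Σ_{a∈A} β_i(a). -/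
open Finset

noncomputable section

/-! Put the `β`-values of the issues, sorted decreasingly, into consecutive blocks of `n`.
The issue `a_{kn}` picked by the agent in round `k` is the last issue of block `k`, so its
`β`-value dominates every value of block `k + 1`, while `β(a_1)` dominates block `1`. Summing,
`n (β(a_1) + ∑ₖ β(a_{kn}))` dominates the sum of all `β`-values; `q ≤ n` guarantees that
`p + 1` blocks cover all issues. The first inequality holds because the agent gains at least
`0` on every issue and exactly `β(a_{kn})` on the issues she picks. -/

section Blocks

variable {M : Type*} [AddCommMonoid M] [PartialOrder M] [IsOrderedAddMonoid M] {f : ℕ → M}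

theorem Antitone.sum_range_add_le_nsmul (hf : Antitone f) {a b : ℕ} (hba : b ≤ a) (n : ℕ) :
    ∑ c ∈ range n, f (a + c) ≤ n • f b := by
  simpa using sum_le_card_nsmul (range n) (fun c => f (a + c)) (f b) fun c _ => hf (by omega)

theorem Antitone.sum_range_succ_mul_le_nsmul (hf : Antitone f) (n K : ℕ) :
    ∑ t ∈ range ((K + 1) * n), f t ≤ n • (f 0 + ∑ k ∈ Icc 1 K, f (k * n - 1)) := by
  induction K with
  | zero => simpa using hf.sum_range_add_le_nsmul (le_refl 0) n
  | succ K ih =>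
    rw [show (K + 1 + 1) * n = (K + 1) * n + n by ring, sum_range_add,
      sum_Icc_succ_top (by omega), ← add_assoc, nsmul_add]
    exact add_le_add ih (hf.sum_range_add_le_nsmul (Nat.sub_le _ _) n)

end Blocks

theorem sum_dite_le_sum_fin {M : Type*} [AddCommMonoid M] [PartialOrder M]
    [IsOrderedAddMonoid M] {m : ℕ} {c : Fin m → M} (hc : ∀ a, 0 ≤ c a) {s : Finset ℕ}
    (hs : s ⊆ range m) :
    ∑ t ∈ s, (if h : t < m then c ⟨t, h⟩ else 0) ≤ ∑ a, c a := by
  rw [sum_fin_eq_sum_range]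
  exact sum_le_sum_of_subset_of_nonneg hs fun t _ _ => by split_ifs <;> simp [hc]

theorem Nat.injOn_mul_sub_one {n : ℕ} (hn : 0 < n) :
    Set.InjOn (fun k => k * n - 1) (Set.Ici 1) := by
  intro x hx y hy hxy
  have := Nat.mul_pos (Nat.lt_of_lt_of_le one_pos hx) hn
  have := Nat.mul_pos (Nat.lt_of_lt_of_le one_pos hy) hn
  exact Nat.eq_of_mul_eq_mul_right hn (by simp only at hxy; omega)

theorem max_min_round_robin_analysis_general {n p q : ℕ} (hn : 0 < n) (hq2 : q ≤ n)
    (C : Fin (p * n + q) → Type*) [∀ a, Fintype (C a)] [∀ a, Nonempty (C a)]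
    (V : (a : Fin (p * n + q)) → C a → ℝ)
    (Vmax Vmin : Fin (p * n + q) → ℝ)
    (hVmin : ∀ a, Vmin a = univ.inf' univ_nonempty (V a))
    (β : ℕ → ℝ)
    (hβ : ∀ (t : ℕ) (h : t < p * n + q), β t = Vmax ⟨t, h⟩ - Vmin ⟨t, h⟩)
    (hβ0 : ∀ t : ℕ, p * n + q ≤ t → β t = 0)
    (hsorted : ∀ s t : ℕ, s ≤ t → β t ≤ β s)
    (π : (a : Fin (p * n + q)) → C a)
    (hpick : ∀ (k : ℕ), 1 ≤ k → k ≤ p → ∀ h : k * n - 1 < p * n + q,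
      V ⟨k * n - 1, h⟩ (π ⟨k * n - 1, h⟩) = Vmax ⟨k * n - 1, h⟩) :
    (∑ k ∈ Finset.Icc 1 p, β (k * n - 1) ≤ (∑ a, V a (π a)) - ∑ a, Vmin a) ∧
      (1 / (n : ℝ)) * ∑ a : Fin (p * n + q), (Vmax a - Vmin a) ≤
        β 0 + ∑ k ∈ Finset.Icc 1 p, β (k * n - 1) := by
  have hpicked_lt : ∀ k ∈ Icc 1 p, k * n - 1 < p * n + q := fun k hk => by
    have := Nat.mul_le_mul_right n (mem_Icc.1 hk).2
    have := Nat.mul_pos (mem_Icc.1 hk).1 hn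
    omega
  constructor
  · have hgain : ∀ a, 0 ≤ V a (π a) - Vmin a := fun a =>
      sub_nonneg.2 (hVmin a ▸ inf'_le _ (mem_univ _))
    calc ∑ k ∈ Icc 1 p, β (k * n - 1)
        = ∑ t ∈ (Icc 1 p).image (· * n - 1),
            (if h : t < p * n + q then V ⟨t, h⟩ (π ⟨t, h⟩) - Vmin ⟨t, h⟩ else 0) := by
          rw [sum_image ((Nat.injOn_mul_sub_one hn).mono fun k hk => (mem_Icc.1 hk).1)]
          refine sum_congr rfl fun k hk => ?_
          rw [dif_pos (hpicked_lt k hk), hβ _ (hpicked_lt k hk),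
            hpick k (mem_Icc.1 hk).1 (mem_Icc.1 hk).2]
      _ ≤ ∑ a, (V a (π a) - Vmin a) :=
          sum_dite_le_sum_fin hgain (image_subset_iff.2 fun k hk => mem_range.2 (hpicked_lt k hk))
      _ = _ := sum_sub_distrib _ _
  · have hsum : ∑ a, (Vmax a - Vmin a) = ∑ t ∈ range ((p + 1) * n), β t := by
      calc ∑ a, (Vmax a - Vmin a) = ∑ a : Fin (p * n + q), β a :=
            sum_congr rfl fun a _ => (hβ a a.2).symm
        _ = ∑ t ∈ range (p * n + q), β t := Fin.sum_univ_eq_sum_range β _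
        _ = ∑ t ∈ range ((p + 1) * n), β t :=
            sum_subset (range_subset_range.2 (by rw [add_one_mul]; omega))
              fun t _ ht => hβ0 t (by simpa using ht)
    rw [hsum, one_div, inv_mul_le_iff₀ (Nat.cast_pos.2 hn), ← nsmul_eq_mul]
    exact Antitone.sum_range_succ_mul_le_nsmul hsorted n p

/-- In the Max-Min Round Robin analysis for a fixed agent `i` with
`m = p·n + q` issues (`1 ≤ q ≤ n`), suppose the issues `a_1, …, a_m` (0-indexed below as
`Fin (p*n+q)`) are ordered in decreasing order of `β = V^max − V^min`, with the
convention that `β` is `0` beyond position `m`.  If the agent receives her maximum value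
on each of the issues `a_n, a_{2n}, …, a_{pn}` (the β-worst available issue in each of
her `p` rounds), then her value satisfies
`V_i(π) − Σ_a V_i^min(a) ≥ Σ_{k=1}^p β(a_{kn})`; moreover
`β(a_1) + Σ_{k=1}^p β(a_{kn}) ≥ (1/n)·Σ_a β(a)`. -/
theorem max_min_round_robin_analysis {n p q : ℕ} (hn : 0 < n) (hq1 : 1 ≤ q) (hq2 : q ≤ n)
    (C : Fin (p * n + q) → Type*) [∀ a, Fintype (C a)] [∀ a, Nonempty (C a)]
    (V : (a : Fin (p * n + q)) → C a → ℝ)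
    (Vmax Vmin : Fin (p * n + q) → ℝ)
    (hVmax : ∀ a, Vmax a = univ.sup' univ_nonempty (V a))
    (hVmin : ∀ a, Vmin a = univ.inf' univ_nonempty (V a))
    (β : ℕ → ℝ)
    (hβ : ∀ (t : ℕ) (h : t < p * n + q), β t = Vmax ⟨t, h⟩ - Vmin ⟨t, h⟩)
    (hβ0 : ∀ t : ℕ, p * n + q ≤ t → β t = 0)
    (hsorted : ∀ s t : ℕ, s ≤ t → β t ≤ β s)
    (π : (a : Fin (p * n + q)) → C a)
    (hpick : ∀ (k : ℕ), 1 ≤ k → k ≤ p → ∀ h : k * n - 1 < p * n + q,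
      V ⟨k * n - 1, h⟩ (π ⟨k * n - 1, h⟩) = Vmax ⟨k * n - 1, h⟩) :
    (∑ k ∈ Finset.Icc 1 p, β (k * n - 1) ≤ (∑ a, V a (π a)) - ∑ a, Vmin a) ∧
      (1 / (n : ℝ)) * ∑ a : Fin (p * n + q), (Vmax a - Vmin a) ≤
        β 0 + ∑ k ∈ Finset.Icc 1 p, β (k * n - 1) :=
  max_min_round_robin_analysis_general hn hq2 C V Vmax Vmin hVmin β hβ hβ0 hsorted π hpick
end
end

section
/- For each agent i, the average over all agents j of agent i's value of the allocation obtained by swapping i's bundle with j's equals agent i's average value over all owners: Σ_{j∈N} V_i(π^{i↔j}) = Σ_{a∈A} Σ_{j∈N} V_i(j,a) holds whenever π is a complete allocation; consequently, PROP-Ave_i is an upper bound on the extended maximin share EMMS_i. -/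
/-!
The worst of the `n!` allocations of a partition is at most their average. Under a uniformly
random permutation of the bundles every item lands with each agent equally often, so this
average is agent `i`'s average value over all owners, summed over the items: `PROP-Ave_i`.
-/

open Finset
open scoped BigOperators

namespace Equiv.Perm

variable {N M : Type*} [Fintype N] [DecidableEq N] [AddCommMonoid M] [Module ℚ≥0 M]

theorem expect_apply (g : N → M) (b : N) :
    𝔼 σ : Perm N, g (σ b) = 𝔼 j, g j := by
  -- Composing with `swap b c` shows the average does not depend on the point `b`.
  have hindep (c : N) : 𝔼 σ : Perm N, g (σ c) = 𝔼 σ : Perm N, g (σ b) :=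
    Fintype.expect_equiv (Equiv.mulRight (swap b c)) _ _ fun σ => by simp
  have : Nonempty N := ⟨b⟩
  calc 𝔼 σ : Perm N, g (σ b) = 𝔼 c, 𝔼 σ : Perm N, g (σ c) := by
        simp only [hindep, Fintype.expect_const]
    _ = 𝔼 σ : Perm N, 𝔼 c, g (σ c) := expect_comm ..
    _ = 𝔼 _σ : Perm N, 𝔼 j, g j :=
        expect_congr rfl fun σ _ => Fintype.expect_equiv σ _ _ fun _ => rfl
    _ = 𝔼 j, g j := Fintype.expect_const _

theorem expect_sum_apply {α : Type*} [Fintype α] (f : N → α → M) (π₀ : α → N) :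
    𝔼 σ : Perm N, ∑ a, f (σ (π₀ a)) a = ∑ a, 𝔼 j, f j a := by
  rw [expect_sum_comm]
  exact sum_congr rfl fun a _ => expect_apply (f · a) (π₀ a)

end Equiv.Perm

-- `π₀` encodes a partition into `n` bundles by sending each item to the index of its bundle;
-- `σ` ranges over the `n!` ways of handing these bundles to the agents.
/-- PROP-Ave is an upper bound on the extended maximin share: for each
agent `i` and every partition of the items into `n` (ordered) bundles — encoded by a map
`π₀` sending each item to the index of its bundle — the worst allocation of that partition
over all permutations of the bundles gives agent `i` at most
`PROP-Ave_i = (1/n)·Σ_a Σ_j V_i(j,a)`.  Consequently `EMMS_i ≤ PROP-Ave_i`. -/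
theorem emms_le_prop_ave {α N : Type*} [Fintype α] [Fintype N] [DecidableEq N] [Nonempty N]
    (V : N → N → α → ℝ) :
    ∀ (i : N) (π₀ : α → N),
      (univ : Finset (Equiv.Perm N)).inf' univ_nonempty
          (fun σ => ∑ a, V i (σ (π₀ a)) a) ≤
        (1 / (Fintype.card N : ℝ)) * ∑ a, ∑ j, V i j a := by
  intro i π₀
  calc _ ≤ 𝔼 σ : Equiv.Perm N, ∑ a, V i (σ (π₀ a)) a :=
        le_expect univ_nonempty fun σ hσ => inf'_le _ hσ
    _ = ∑ a, 𝔼 j, V i j a := Equiv.Perm.expect_sum_apply _ π₀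
    _ = (1 / (Fintype.card N : ℝ)) * ∑ a, ∑ j, V i j a := by
        simp only [Fintype.expect_eq_sum_div_card, ← sum_div, one_div_mul_eq_div]
end

section
/- In the 3-agent binary no-chore setting, if two items a and b of the same type occur (i.e., Δ_{ij}(a)=Δ_{ij}(b) for all pairs i,j, where Δ_{ij}(a)=V_i(i,a)−V_i(j,a)), and an instance obtained by removing n items of a single type (one per agent) admits an EF1 allocation, then the original instance admits an EF1 allocation; more generally, removing any multiple of n items of a common type preserves EF1-existence. -/
open Finset

noncomputable section

/-- EF1 for the instance restricted to the items in `S`: for every pair of agents,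
removing at most one item (from `S`) eliminates the envy. -/
def EF1On {α N : Type*} [DecidableEq α] [DecidableEq N]
    (V : N → N → α → ℝ) (S : Finset α) (π : α → N) : Prop :=
  ∀ i j : N, ∃ C : Finset α, C ⊆ S ∧ C.card ≤ 1 ∧
    ∑ a ∈ S \ C, V i (swapAlloc i j π a) a ≤ ∑ a ∈ S \ C, V i (π a) a

/-- In the setting with additive externalities, removing any multiple of
`n` items of a common type preserves EF1-existence: if `B` is a set of `k·n` items all of
the same type (i.e. `Δ_{ij}(a) = Δ_{ij}(b)` for all agents `i,j` and `a,b ∈ B`, where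
`Δ_{ij}(a) = V_i(i,a) − V_i(j,a)`), and the instance on the remaining items admits an EF1
allocation, then the original instance admits an EF1 allocation. -/
theorem ef1_preserved_removing_same_type {α N : Type*} [Fintype α] [DecidableEq α]
    [Fintype N] [DecidableEq N] (V : N → N → α → ℝ) (k : ℕ) (B : Finset α)
    (hcard : B.card = k * Fintype.card N)
    (htype : ∀ a ∈ B, ∀ b ∈ B, ∀ i j : N, V i i a - V i j a = V i i b - V i j b)
    (h : ∃ π : α → N, EF1On V (univ \ B) π) :
    ∃ π : α → N, EF1On V univ π := by
  classical
  obtain ⟨π, hπ⟩ := h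
  rcases isEmpty_or_nonempty N with hN | hN
  · exact ⟨π, fun i j => (IsEmpty.false i).elim⟩
  -- equivalence distributing B evenly: B ≃ Fin k × N
  let g : {x // x ∈ B} ≃ Fin k × N :=
    B.equivFin.trans ((finCongr hcard).trans
      (finProdFinEquiv.symm.trans
        ((Equiv.refl (Fin k)).prodCongr (Fintype.equivFin N).symm)))
  let π' : α → N := fun a => if ha : a ∈ B then (g ⟨a, ha⟩).2 else π a
  have hπ'B : ∀ a (ha : a ∈ B), π' a = (g ⟨a, ha⟩).2 := fun a ha => dif_pos ha
  have hπ'nB : ∀ a, a ∉ B → π' a = π a := fun a ha => dif_neg ha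
  -- each agent gets exactly k items of B
  have hcount : ∀ t : N, (B.filter (fun a => π' a = t)).card = k := by
    intro t
    have : (B.filter (fun a => π' a = t)).card = (univ : Finset (Fin k)).card := by
      refine Finset.card_bij' (fun a ha => (g ⟨a, (Finset.mem_filter.mp ha).1⟩).1)
        (fun m _ => (g.symm (m, t)).val) ?_ ?_ ?_ ?_
      · intro a ha
        exact mem_univ _
      · intro m _
        rw [Finset.mem_filter]
        refine ⟨(g.symm (m, t)).2, ?_⟩
        rw [hπ'B _ (g.symm (m, t)).2, Subtype.coe_eta, Equiv.apply_symm_apply]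
      · intro a ha
        have hmem := (Finset.mem_filter.mp ha).1
        have h2 : (g ⟨a, hmem⟩).2 = t := by
          rw [← hπ'B _ hmem]; exact (Finset.mem_filter.mp ha).2
        have key : ((g ⟨a, hmem⟩).1, t) = g ⟨a, hmem⟩ := Prod.ext rfl h2.symm
        show ((g.symm ((g ⟨a, hmem⟩).1, t)) : α) = a
        rw [key, Equiv.symm_apply_apply]
      · intro m hm
        show (g ⟨(g.symm (m, t)).val, (g.symm (m, t)).2⟩).1 = m
        rw [Subtype.coe_eta, Equiv.apply_symm_apply]
    simpa using this
  refine ⟨π', fun i j => ?_⟩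
  obtain ⟨C, hCsub, hCcard, hCle⟩ := hπ i j
  have hCB : ∀ a ∈ C, a ∉ B := fun a ha => (Finset.mem_sdiff.mp (hCsub ha)).2
  refine ⟨C, Finset.subset_univ C, hCcard, ?_⟩
  -- decompose univ \ C
  have hdecomp : (univ : Finset α) \ C = ((univ \ B) \ C) ∪ B := by
    ext a
    simp only [Finset.mem_sdiff, Finset.mem_union, Finset.mem_univ, true_and]
    constructor
    · intro ha
      by_cases hB : a ∈ B
      · exact Or.inr hB
      · exact Or.inl ⟨hB, ha⟩
    · rintro (⟨_, ha⟩ | hB)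
      · exact ha
      · exact fun hc => hCB a hc hB
  have hdisj : Disjoint ((univ \ B) \ C) B := by
    apply Finset.disjoint_left.mpr
    intro a ha
    exact ((Finset.mem_sdiff.mp (Finset.mem_sdiff.mp ha).1).2)
  -- on (univ\B)\C, π' = π
  have hcong1 : ∑ a ∈ (univ \ B) \ C, V i (swapAlloc i j π' a) a
      = ∑ a ∈ (univ \ B) \ C, V i (swapAlloc i j π a) a := by
    apply Finset.sum_congr rfl
    intro a ha
    have : a ∉ B := (Finset.mem_sdiff.mp (Finset.mem_sdiff.mp ha).1).2
    simp [swapAlloc, hπ'nB a this]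
  have hcong2 : ∑ a ∈ (univ \ B) \ C, V i (π' a) a
      = ∑ a ∈ (univ \ B) \ C, V i (π a) a := by
    apply Finset.sum_congr rfl
    intro a ha
    have : a ∉ B := (Finset.mem_sdiff.mp (Finset.mem_sdiff.mp ha).1).2
    rw [hπ'nB a this]
  -- the B part contributes equally
  have hBeq : ∑ a ∈ B, V i (swapAlloc i j π' a) a = ∑ a ∈ B, V i (π' a) a := by
    rcases eq_or_ne i j with rfl | hij
    · apply Finset.sum_congr rfl
      intro a _
      simp [swapAlloc]
    rcases B.eq_empty_or_nonempty with rfl | ⟨b0, hb0⟩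
    · simp
    set c : ℝ := V i i b0 - V i j b0 with hc
    have hterm : ∀ a ∈ B, V i (π' a) a - V i (swapAlloc i j π' a) a
        = c * ((if π' a = i then (1:ℝ) else 0) - (if π' a = j then (1:ℝ) else 0)) := by
      intro a ha
      by_cases h1 : π' a = i
      · rw [show (swapAlloc i j π' a) = j by simp [swapAlloc, h1], h1,
          if_pos rfl, if_neg hij]
        rw [htype a ha b0 hb0 i j, hc]; ring
      · by_cases h2 : π' a = j
        · rw [show (swapAlloc i j π' a) = i by simp [swapAlloc, h2], h2,
            if_neg (Ne.symm hij), if_pos rfl]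
          have := htype a ha b0 hb0 i j
          rw [hc]; linarith
        · rw [show (swapAlloc i j π' a) = π' a by
            simp [swapAlloc, Equiv.swap_apply_of_ne_of_ne h1 h2],
            if_neg h1, if_neg h2]
          ring
    have hsum : ∑ a ∈ B, (V i (π' a) a - V i (swapAlloc i j π' a) a) = 0 := by
      rw [Finset.sum_congr rfl hterm]
      rw [← Finset.mul_sum, Finset.sum_sub_distrib]
      rw [Finset.sum_boole, Finset.sum_boole, hcount i, hcount j]
      ring
    have := Finset.sum_sub_distrib (s := B) (f := fun a => V i (π' a) a)
      (g := fun a => V i (swapAlloc i j π' a) a)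
    linarith [hsum, this]
  rw [hdecomp, Finset.sum_union hdisj, Finset.sum_union hdisj, hcong1, hcong2, hBeq]
  linarith [hCle]
end
end
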